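/- Let k be a field, A = k[x]/(x^2) graded with deg(x) = 1, and H = k[X, X^{-1}]. For a ∈ k, the element (1 - ax) ⊗ 1 + ax ⊗ X is a grouplike element of the coring A ⊗ k[X,X^{-1}], equal to d(1 + ax) where 1 + ax is a unit of A; for a ≠ 0 it is not of the form Σ_i e_i ⊗ X^{d_i} for orthogonal idempotents e_i summing to 1. -/

import Mathlib

open TensorProduct LaurentPolynomial

universe u

namespace GradedGrouplike

variable {k : Type u} [CommRing k]

/-- The comultiplication of the Hopf algebra `H = k[X, X⁻¹] = k ℤ`, `Δ(Xⁿ) = Xⁿ ⊗ Xⁿ`. -/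
noncomputable def comulL :
    LaurentPolynomial k →ₗ[k] LaurentPolynomial k ⊗[k] LaurentPolynomial k :=
  Finsupp.lsum k (fun n : ℤ =>
    LinearMap.toSpanSingleton k _ ((T n : LaurentPolynomial k) ⊗ₜ[k] (T n : LaurentPolynomial k)))
    ∘ₗ (AddMonoidAlgebra.coeffLinearEquiv k).toLinearMap

/-- The counit of `k[X, X⁻¹]`, `ε(Xⁿ) = 1`. -/
noncomputable def counitL : LaurentPolynomial k →ₗ[k] k :=
  Finsupp.lsum k (fun _ : ℤ => LinearMap.toSpanSingleton k k 1)
    ∘ₗ (AddMonoidAlgebra.coeffLinearEquiv k).toLinearMap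

variable {A : Type u} [CommRing A] [Algebra k A]

/-- `x ∈ A ⊗ k[X,X⁻¹]` is a grouplike element of the coring `A ⊗ k[X,X⁻¹]` associated to
the coaction `ρ` (written via the identification
`(A ⊗ H) ⊗_A (A ⊗ H) ≅ A ⊗ H ⊗ H`, cf. the Harrison 1-cocycle condition). -/
noncomputable def IsGrouplikeL (ρ : A →ₗ[k] A ⊗[k] LaurentPolynomial k)
    (x : A ⊗[k] LaurentPolynomial k) : Prop :=
  (TensorProduct.assoc k A (LaurentPolynomial k) (LaurentPolynomial k)).symm
      ((LinearMap.lTensor A comulL) x)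
    = (LinearMap.rTensor (LaurentPolynomial k) (LinearMap.mulLeft k x))
        ((LinearMap.rTensor (LaurentPolynomial k) ρ) x) ∧
  (TensorProduct.rid k A) ((LinearMap.lTensor A counitL) x) = 1

end GradedGrouplike

namespace GradedGrouplike

variable {k : Type u} [Field k]

/-- The coaction `k[x]/(x²) → k[x]/(x²) ⊗ k[X,X⁻¹]` of the grading with `deg x = 1`:
`a + bx ↦ a ⊗ 1 + bx ⊗ X`. -/
noncomputable def dualNumberCoaction :
    DualNumber k →ₗ[k] DualNumber k ⊗[k] LaurentPolynomial k where
  toFun := fun z =>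
    (TrivSqZeroExt.inl z.fst : DualNumber k) ⊗ₜ[k] (T 0 : LaurentPolynomial k)
      + (z.snd • (DualNumber.eps : DualNumber k)) ⊗ₜ[k] (T 1 : LaurentPolynomial k)
  map_add' := fun z w => by
    simp only [TrivSqZeroExt.fst_add, TrivSqZeroExt.snd_add, TrivSqZeroExt.inl_add,
      add_smul, TensorProduct.add_tmul]
    abel
  map_smul' := fun t z => by
    simp only [TrivSqZeroExt.fst_smul, TrivSqZeroExt.snd_smul, TrivSqZeroExt.inl_smul,
      RingHom.id_apply, smul_add, TensorProduct.smul_tmul', smul_assoc]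

end GradedGrouplike

/-!
The element `d(1 + aε) = (1 - aε) ⊗ 1 + aε ⊗ X` is grouplike because `v = aε` is homogeneous
of degree 1 with `v² = 0`: multiplication by `d(1 + aε)` sends `ρ(v) = v ⊗ X` to `v ⊗ X` and
`ρ(1 - v) = 1 - v ⊗ X` to `(1 - v) ⊗ 1`, so both sides of the grouplike condition equal
`(1 - v) ⊗ 1 ⊗ 1 + v ⊗ X ⊗ X`.
On the other hand an idempotent of `k[ε]` has zero `ε`-component, so every `Σ eᵢ ⊗ X^{dᵢ}` has
coefficient `0` at `ε ⊗ X`, whereas that coefficient of `d(1 + aε)` is `a`.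
-/

namespace GradedGrouplike

section LaurentBialgebra

variable {k : Type u} [CommRing k]

lemma coeffLinearEquiv_T (n : ℤ) :
    AddMonoidAlgebra.coeffLinearEquiv k (T n : LaurentPolynomial k) = Finsupp.single n 1 :=
  rfl

lemma comulL_T (n : ℤ) :
    comulL (T n : LaurentPolynomial k) = (T n : LaurentPolynomial k) ⊗ₜ[k] T n := by
  rw [comulL, LinearMap.comp_apply, LinearEquiv.coe_coe, coeffLinearEquiv_T, Finsupp.lsum_single,
    LinearMap.toSpanSingleton_apply, one_smul]

lemma counitL_T (n : ℤ) : counitL (T n : LaurentPolynomial k) = 1 := by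
  rw [counitL, LinearMap.comp_apply, LinearEquiv.coe_coe, coeffLinearEquiv_T, Finsupp.lsum_single,
    LinearMap.toSpanSingleton_apply, one_smul]

end LaurentBialgebra

section DualNumber

open TrivSqZeroExt DualNumber

variable {k : Type u} [CommRing k]

lemma _root_.DualNumber.snd_eq_zero_of_isIdempotentElem {z : DualNumber k}
    (h : IsIdempotentElem z) : z.snd = 0 := by
  have hfst : z.fst * z.fst = z.fst := congrArg fst h
  have hsnd : 2 * z.fst * z.snd = z.snd := by
    have := congrArg snd h
    rw [DualNumber.snd_mul] at this
    linear_combination this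
  linear_combination (2 * z.fst - 1) * hsnd - 4 * z.snd * hfst

lemma isUnit_one_add_smul_eps (a : k) : IsUnit ((1 : DualNumber k) + a • ε) := by
  simp [isUnit_iff_isUnit_fst]

noncomputable def epsCoeff (n : ℤ) : DualNumber k ⊗[k] LaurentPolynomial k →ₗ[k] k :=
  (TensorProduct.lid k k).toLinearMap ∘ₗ
    TensorProduct.map (sndHom k k)
      (Finsupp.lapply n ∘ₗ (AddMonoidAlgebra.coeffLinearEquiv k).toLinearMap)

lemma epsCoeff_tmul_T (n m : ℤ) (z : DualNumber k) :
    epsCoeff n (z ⊗ₜ[k] (T m : LaurentPolynomial k)) = if m = n then z.snd else 0 := by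
  simp [epsCoeff]

lemma epsCoeff_sum_idempotent_tmul_T {ι : Type*} (s : Finset ι) (e : ι → DualNumber k)
    (he : ∀ i, IsIdempotentElem (e i)) (d : ι → ℤ) (n : ℤ) :
    epsCoeff n (∑ i ∈ s, e i ⊗ₜ[k] (T (d i) : LaurentPolynomial k)) = 0 := by
  simp [epsCoeff_tmul_T, snd_eq_zero_of_isIdempotentElem (he _)]

end DualNumber

section Coaction

open TrivSqZeroExt DualNumber

variable {k : Type u} [Field k]

lemma dualNumberCoaction_apply (z : DualNumber k) :
    dualNumberCoaction z = (inl z.fst : DualNumber k) ⊗ₜ[k] (T 0 : LaurentPolynomial k)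
      + (z.snd • ε : DualNumber k) ⊗ₜ[k] (T 1 : LaurentPolynomial k) :=
  rfl

lemma dualNumberCoaction_one : dualNumberCoaction (1 : DualNumber k) = 1 := by
  simp [dualNumberCoaction_apply, Algebra.TensorProduct.one_def]

lemma dualNumberCoaction_smul_eps (a : k) :
    dualNumberCoaction (a • ε : DualNumber k) = (a • ε : DualNumber k) ⊗ₜ[k] T 1 := by
  simp [dualNumberCoaction_apply, smul_tmul']

lemma smul_eps_mul_smul_eps (a b : k) : (a • ε : DualNumber k) * (b • ε) = 0 := by
  rw [smul_mul_smul_comm, eps_mul_eps, smul_zero]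

lemma one_sub_smul_eps_mul_smul_eps (a b : k) : (1 - a • ε : DualNumber k) * (b • ε) = b • ε := by
  linear_combination -smul_eps_mul_smul_eps a b

noncomputable def nilpotentGrouplike (a : k) : DualNumber k ⊗[k] LaurentPolynomial k :=
  (1 - a • ε : DualNumber k) ⊗ₜ[k] (T 0 : LaurentPolynomial k)
    + (a • ε : DualNumber k) ⊗ₜ[k] (T 1 : LaurentPolynomial k)

lemma mul_dualNumberCoaction_one_add_smul_eps (a : k) :
    ((1 - a • ε : DualNumber k) ⊗ₜ[k] (1 : LaurentPolynomial k))
        * dualNumberCoaction (1 + a • ε) = nilpotentGrouplike a := by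
  have h : ((1 - a • ε : DualNumber k) ⊗ₜ[k] (1 : LaurentPolynomial k)) * ((a • ε) ⊗ₜ[k] T 1)
      = (a • ε : DualNumber k) ⊗ₜ[k] (T 1 : LaurentPolynomial k) := by
    rw [Algebra.TensorProduct.tmul_mul_tmul, one_sub_smul_eps_mul_smul_eps, one_mul]
  rw [map_add, dualNumberCoaction_one, dualNumberCoaction_smul_eps, nilpotentGrouplike, T_zero]
  linear_combination h

lemma isGrouplikeL_nilpotentGrouplike (a : k) :
    IsGrouplikeL dualNumberCoaction (nilpotentGrouplike a) := by
  unfold nilpotentGrouplike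
  set v : DualNumber k := a • ε
  set x := (1 - v) ⊗ₜ[k] (T 0 : LaurentPolynomial k) + v ⊗ₜ[k] (T 1 : LaurentPolynomial k)
  have hx_ρv : x * dualNumberCoaction v = v ⊗ₜ[k] T 1 := by
    have h₀ : ((1 - v) ⊗ₜ[k] (T 0 : LaurentPolynomial k)) * (v ⊗ₜ[k] T 1) = v ⊗ₜ[k] T 1 := by
      rw [Algebra.TensorProduct.tmul_mul_tmul, one_sub_smul_eps_mul_smul_eps, ← T_add, zero_add]
    have h₁ : (v ⊗ₜ[k] (T 1 : LaurentPolynomial k)) * (v ⊗ₜ[k] T 1) = 0 := by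
      rw [Algebra.TensorProduct.tmul_mul_tmul, smul_eps_mul_smul_eps, zero_tmul]
    rw [dualNumberCoaction_smul_eps]
    linear_combination h₀ + h₁
  have hx_ρ1v : x * dualNumberCoaction (1 - v) = (1 - v) ⊗ₜ[k] T 0 := by
    rw [map_sub, dualNumberCoaction_one]
    linear_combination -hx_ρv
  have hΔ : (TensorProduct.assoc k (DualNumber k) (LaurentPolynomial k) (LaurentPolynomial k)).symm
        (LinearMap.lTensor (DualNumber k) comulL x)
      = ((1 - v) ⊗ₜ[k] T 0) ⊗ₜ[k] T 0 + (v ⊗ₜ[k] T 1) ⊗ₜ[k] (T 1 : LaurentPolynomial k) := by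
    simp only [x, map_add, LinearMap.lTensor_tmul, comulL_T, assoc_symm_tmul]
  have hρ : LinearMap.rTensor (LaurentPolynomial k) (LinearMap.mulLeft k x)
        (LinearMap.rTensor (LaurentPolynomial k) dualNumberCoaction x)
      = (x * dualNumberCoaction (1 - v)) ⊗ₜ[k] T 0
        + (x * dualNumberCoaction v) ⊗ₜ[k] (T 1 : LaurentPolynomial k) := by
    simp only [x, map_add, LinearMap.rTensor_tmul, LinearMap.mulLeft_apply]
  refine ⟨?_, ?_⟩
  · rw [hΔ, hρ, hx_ρv, hx_ρ1v]
  · simp only [x, map_add, LinearMap.lTensor_tmul, counitL_T, rid_tmul, one_smul, sub_add_cancel]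

lemma nilpotentGrouplike_ne_sum_idempotent_tmul {a : k} (ha : a ≠ 0) {ι : Type*}
    (s : Finset ι) (e : ι → DualNumber k) (he : ∀ i, IsIdempotentElem (e i)) (d : ι → ℤ) :
    nilpotentGrouplike a ≠ ∑ i ∈ s, e i ⊗ₜ[k] (T (d i) : LaurentPolynomial k) := by
  intro h
  have h₁ := congrArg (epsCoeff 1) h
  rw [epsCoeff_sum_idempotent_tmul_T s e he, nilpotentGrouplike, map_add, epsCoeff_tmul_T,
    epsCoeff_tmul_T] at h₁
  simp only [Int.zero_ne_one, if_false, if_true, snd_smul, snd_eps, smul_eq_mul, mul_one,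
    zero_add] at h₁
  exact ha h₁

end Coaction

end GradedGrouplike

open GradedGrouplike TrivSqZeroExt in
/-- for `A = k[x]/(x²)` graded by `deg x = 1` and `H = k[X, X⁻¹]`, and
`a ∈ k`, the element `(1 - ax) ⊗ 1 + ax ⊗ X` is a grouplike element of the coring
`A ⊗ k[X,X⁻¹]`, equal to `d(1 + ax)` for the unit `1 + ax` of `A`; but for `a ≠ 0` it is
not of the form `Σᵢ eᵢ ⊗ X^{dᵢ}` with `eᵢ` orthogonal idempotents summing to `1`. -/
theorem nilpotent_counterexample
    {k : Type u} [Field k] (a : k) :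
    IsUnit ((1 : DualNumber k) + a • DualNumber.eps) ∧
    IsGrouplikeL dualNumberCoaction
      (((1 : DualNumber k) - a • DualNumber.eps) ⊗ₜ[k] (T 0 : LaurentPolynomial k)
        + (a • DualNumber.eps) ⊗ₜ[k] (T 1 : LaurentPolynomial k)) ∧
    ((((1 : DualNumber k) - a • DualNumber.eps) ⊗ₜ[k] (1 : LaurentPolynomial k))
        * dualNumberCoaction ((1 : DualNumber k) + a • DualNumber.eps)
      = ((1 : DualNumber k) - a • DualNumber.eps) ⊗ₜ[k] (T 0 : LaurentPolynomial k)
        + (a • DualNumber.eps) ⊗ₜ[k] (T 1 : LaurentPolynomial k)) ∧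
    (a ≠ 0 →
      ¬ ∃ (n : ℕ) (e : Fin n → DualNumber k) (d : Fin n → ℤ),
        (∀ i, IsIdempotentElem (e i)) ∧
        (∀ i j, i ≠ j → e i * e j = 0) ∧
        (∑ i, e i = 1) ∧
        ((1 : DualNumber k) - a • DualNumber.eps) ⊗ₜ[k] (T 0 : LaurentPolynomial k)
            + (a • DualNumber.eps) ⊗ₜ[k] (T 1 : LaurentPolynomial k)
          = ∑ i, (e i) ⊗ₜ[k] (T (d i) : LaurentPolynomial k)) := by
  refine ⟨isUnit_one_add_smul_eps a, isGrouplikeL_nilpotentGrouplike a,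
    mul_dualNumberCoaction_one_add_smul_eps a, ?_⟩
  rintro ha ⟨n, e, d, he, -, -, h⟩
  exact nilpotentGrouplike_ne_sum_idempotent_tmul ha _ e he d h
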